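/- For every tree t in the free magma M on x with deg(t) = n ≥ 1, the number â(t) = n!·ω(n)·a(t) is a positive integer, equal to a product of Mersenne binomials over the inner nodes of t. -/

import Mathlib

def deg : FreeMagma Unit → ℕ
  | FreeMagma.of _ => 1
  | FreeMagma.mul t₁ t₂ => deg t₁ + deg t₂

def expCoeff : FreeMagma Unit → ℚ
  | FreeMagma.of _ => 1
  | FreeMagma.mul t₁ t₂ =>
      expCoeff t₁ * expCoeff t₂ / (2 ^ (deg (FreeMagma.mul t₁ t₂)) - 2)

/-- Mersenne factorial. -/
def mersenneFact (m : ℕ) : ℕ := ∏ i ∈ Finset.Icc 1 m, (2 ^ i - 1)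

/-- Mersenne binomial coefficient, as a rational number. -/
def mersenneBinom (n r : ℕ) : ℚ :=
  (mersenneFact n : ℚ) / ((mersenneFact r : ℚ) * (mersenneFact (n - r) : ℚ))

def omegaQ (n : ℕ) : ℚ := 2 ^ (n - 1) * (mersenneFact (n - 1) : ℚ) / (n.factorial : ℚ)

/-- `â(t) = n! · ω(n) · a(t)` where `n = deg t`. -/
def ahat (t : FreeMagma Unit) : ℚ :=
  ((deg t).factorial : ℚ) * omegaQ (deg t) * expCoeff t

/-- Product of Mersenne binomials over the inner nodes of a tree. -/
def innerProd : FreeMagma Unit → ℚ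
  | FreeMagma.of _ => 1
  | FreeMagma.mul t₁ t₂ =>
      mersenneBinom (deg t₁ + deg t₂ - 2) (deg t₁ - 1) * innerProd t₁ * innerProd t₂

/-! With `[m]! = ∏_{i ≤ m} (2^i - 1)` one has `n! ω(n) = 2^(n-1) [n-1]!`. At an inner node whose
subtrees have degrees `a + 1` and `b + 1`, the denominator `2^(a+b+2) - 2 = 2 (2^(a+b+1) - 1)` of
the recursion for `a` cancels the top factor of `[a+b+1]!`, leaving
`â(t₁ t₂) = [a+b]! / ([a]! [b]!) · â(t₁) â(t₂)`. The Mersenne binomials are positive integers by the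
`q = 2` Pascal rule `C(n+1, r+1) = C(n, r) + 2^(r+1) C(n, r+1)`. -/

@[simp] lemma mersenneFact_zero : mersenneFact 0 = 1 := rfl

lemma mersenneFact_succ (m : ℕ) :
    mersenneFact (m + 1) = mersenneFact m * (2 ^ (m + 1) - 1) :=
  Finset.prod_Icc_succ_top (Nat.le_add_left 1 m) _

lemma mersenneFact_pos (m : ℕ) : 0 < mersenneFact m :=
  Finset.prod_pos fun _ hi =>
    Nat.sub_pos_of_lt (Nat.one_lt_two_pow (Nat.one_le_iff_ne_zero.1 (Finset.mem_Icc.1 hi).1))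

lemma cast_mersenneFact_succ (m : ℕ) :
    (mersenneFact (m + 1) : ℚ) = mersenneFact m * (2 ^ (m + 1) - 1) := by
  rw [mersenneFact_succ, Nat.cast_mul, Nat.cast_sub Nat.one_le_two_pow]
  norm_num

lemma cast_mersenneFact_ne_zero (m : ℕ) : (mersenneFact m : ℚ) ≠ 0 :=
  Nat.cast_ne_zero.2 (mersenneFact_pos m).ne'

lemma two_pow_succ_sub_one_ne_zero (k : ℕ) : (2 : ℚ) ^ (k + 1) - 1 ≠ 0 :=
  sub_ne_zero.2 (one_lt_pow₀ one_lt_two k.succ_ne_zero).ne'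

def mersenneChoose : ℕ → ℕ → ℕ
  | _, 0 => 1
  | 0, _ + 1 => 0
  | n + 1, r + 1 => mersenneChoose n r + 2 ^ (r + 1) * mersenneChoose n (r + 1)

@[simp] lemma mersenneChoose_zero_right (n : ℕ) : mersenneChoose n 0 = 1 := by
  cases n <;> rfl

lemma mersenneChoose_succ_succ (n r : ℕ) :
    mersenneChoose (n + 1) (r + 1) = mersenneChoose n r + 2 ^ (r + 1) * mersenneChoose n (r + 1) :=
  rfl

lemma mersenneChoose_eq_zero_of_lt {n r : ℕ} (h : n < r) : mersenneChoose n r = 0 := by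
  induction n generalizing r with
  | zero => obtain ⟨r, rfl⟩ := Nat.exists_eq_succ_of_ne_zero h.ne'; rfl
  | succ n ih =>
    obtain ⟨r, rfl⟩ := Nat.exists_eq_succ_of_ne_zero (Nat.ne_zero_of_lt h)
    rw [mersenneChoose_succ_succ, ih (by omega), ih (by omega), mul_zero, add_zero]

@[simp] lemma mersenneChoose_self (n : ℕ) : mersenneChoose n n = 1 := by
  induction n with
  | zero => rfl
  | succ n ih =>
    rw [mersenneChoose_succ_succ, ih, mersenneChoose_eq_zero_of_lt n.lt_succ_self, mul_zero,
      add_zero]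

lemma mersenneChoose_pos {n r : ℕ} (h : r ≤ n) : 0 < mersenneChoose n r := by
  induction n generalizing r with
  | zero => simp [Nat.le_zero.1 h]
  | succ n ih =>
    cases r with
    | zero => simp
    | succ r => exact Nat.add_pos_left (ih (by omega)) _

lemma mersenneChoose_mul_mersenneFact_mul_mersenneFact (r s : ℕ) :
    (mersenneChoose (r + s) r : ℚ) * mersenneFact r * mersenneFact s = mersenneFact (r + s) := by
  induction s generalizing r with
  | zero => simp
  | succ s ihs =>
    induction r with
    | zero => simp
    | succ r ihr =>
      have hr1s := ihs (r + 1)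
      rw [show r + (s + 1) = r + 1 + s by ring] at ihr
      rw [show r + 1 + (s + 1) = r + 1 + s + 1 from rfl, mersenneChoose_succ_succ,
        cast_mersenneFact_succ (r + 1 + s)]
      push_cast
      simp only [cast_mersenneFact_succ r, cast_mersenneFact_succ s] at ihr hr1s ⊢
      -- `2^(r+s+2) - 1 = (2^(r+1) - 1) + 2^(r+1) (2^(s+1) - 1)`
      linear_combination (2 ^ (r + 1) - 1) * ihr + 2 ^ (r + 1) * (2 ^ (s + 1) - 1) * hr1s

lemma mersenneBinom_add_left (r s : ℕ) : mersenneBinom (r + s) r = mersenneChoose (r + s) r := by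
  rw [mersenneBinom, Nat.add_sub_cancel_left, div_eq_iff (mul_ne_zero
    (cast_mersenneFact_ne_zero r) (cast_mersenneFact_ne_zero s)), ← mul_assoc,
    mersenneChoose_mul_mersenneFact_mul_mersenneFact]

lemma factorial_mul_omegaQ (n : ℕ) :
    (n.factorial : ℚ) * omegaQ n = 2 ^ (n - 1) * mersenneFact (n - 1) :=
  mul_div_cancel₀ _ (Nat.cast_ne_zero.2 n.factorial_ne_zero)

@[simp] lemma deg_mul (t₁ t₂ : FreeMagma Unit) : deg (t₁ * t₂) = deg t₁ + deg t₂ := rfl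

lemma deg_pos (t : FreeMagma Unit) : 0 < deg t := by
  induction t with
  | ih1 => exact Nat.one_pos
  | ih2 t₁ t₂ ih₁ _ => exact Nat.add_pos_left ih₁ _

lemma ahat_of (x : Unit) : ahat (FreeMagma.of x) = 1 := by
  simp [ahat, deg, expCoeff, omegaQ]

lemma ahat_mul (t₁ t₂ : FreeMagma Unit) :
    ahat (t₁ * t₂) = mersenneBinom (deg t₁ + deg t₂ - 2) (deg t₁ - 1) * ahat t₁ * ahat t₂ := by
  obtain ⟨a, ha⟩ := Nat.exists_eq_add_one_of_ne_zero (deg_pos t₁).ne'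
  obtain ⟨b, hb⟩ := Nat.exists_eq_add_one_of_ne_zero (deg_pos t₂).ne'
  have hexp : expCoeff (t₁ * t₂) = expCoeff t₁ * expCoeff t₂ / (2 ^ (deg t₁ + deg t₂) - 2) := rfl
  simp only [ahat, factorial_mul_omegaQ, deg_mul, hexp, ha, hb, mersenneBinom,
    show a + 1 + (b + 1) - 1 = a + b + 1 by omega, show a + 1 + (b + 1) - 2 = a + b by omega,
    Nat.add_sub_cancel, Nat.add_sub_cancel_left, cast_mersenneFact_succ (a + b)]
  have hden : (2 : ℚ) ^ (a + 1 + (b + 1)) - 2 = 2 * (2 ^ (a + b + 1) - 1) := by ring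
  rw [hden]
  have ha₀ := cast_mersenneFact_ne_zero a
  have hb₀ := cast_mersenneFact_ne_zero b
  field_simp [two_pow_succ_sub_one_ne_zero]
  ring

lemma innerProd_mul (t₁ t₂ : FreeMagma Unit) :
    innerProd (t₁ * t₂) =
      mersenneBinom (deg t₁ + deg t₂ - 2) (deg t₁ - 1) * innerProd t₁ * innerProd t₂ :=
  rfl

lemma ahat_eq_innerProd (t : FreeMagma Unit) : ahat t = innerProd t := by
  induction t with
  | ih1 x => exact ahat_of x
  | ih2 t₁ t₂ ih₁ ih₂ => rw [ahat_mul, innerProd_mul, ih₁, ih₂]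

lemma exists_pos_natCast_eq_innerProd (t : FreeMagma Unit) :
    ∃ k : ℕ, 0 < k ∧ innerProd t = k := by
  induction t with
  | ih1 => exact ⟨1, Nat.one_pos, Nat.cast_one.symm⟩
  | ih2 t₁ t₂ ih₁ ih₂ =>
    obtain ⟨k₁, hk₁, h₁⟩ := ih₁
    obtain ⟨k₂, hk₂, h₂⟩ := ih₂
    obtain ⟨a, ha⟩ := Nat.exists_eq_add_one_of_ne_zero (deg_pos t₁).ne'
    obtain ⟨b, hb⟩ := Nat.exists_eq_add_one_of_ne_zero (deg_pos t₂).ne'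
    refine ⟨mersenneChoose (a + b) a * k₁ * k₂,
      Nat.mul_pos (Nat.mul_pos (mersenneChoose_pos (Nat.le_add_right a b)) hk₁) hk₂, ?_⟩
    rw [innerProd_mul, ha, hb, show a + 1 + (b + 1) - 2 = a + b by omega, Nat.add_sub_cancel,
      mersenneBinom_add_left, h₁, h₂]
    norm_cast

theorem ahat_pos_integer_eq_prod_mersenne_binomials (t : FreeMagma Unit) :
    (∃ k : ℕ, 0 < k ∧ ahat t = (k : ℚ)) ∧ ahat t = innerProd t := by
  rw [ahat_eq_innerProd]
  exact ⟨exists_pos_natCast_eq_innerProd t, rfl⟩
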